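/- Let φ: ℕ → (0,∞). If Σ_k 1/φ(k) = ∞, then for Lebesgue-almost every α ∈ (0,1), a_k(α) > φ(k) for infinitely many k. -/

import Mathlib

/-!
A point `α` of `(0, 1)` with prescribed first `k` partial quotients `b` lies in a cylinder which,
up to the rationals, is the image of `(0, 1)` under the Möbius map
`t ↦ (p + p' t) / (q + q' t)` of `[0; b 0, …, b (k - 1) + t]`, of determinant `±1`. The points
of the cylinder with `gaussMap^[k] α < c` form the image of `(0, c)`, of length
`c / (q (q + q' c)) ≥ c / (q (q + q'))`, i.e. at least `c` times the length of the cylinder. With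
`c = 1 / (⌊x⌋ + 1)` this says that, given the first `k` partial quotients, `a_{k+1} > x` has
conditional probability at least `1 / (⌊x⌋ + 1)`. For `x = φ (k + 1)` these bounds have a divergent
sum, so Lévy's conditional Borel–Cantelli lemma gives `a_k > φ k` infinitely often almost surely.
-/

open Filter MeasureTheory Real

/-- Distance from `x` to the nearest integer. -/
noncomputable def nd (x : ℝ) : ℝ := |x - round x|

/-- The Gauss map `x ↦ frac (1/x)` (with `0 ↦ 0`). -/
noncomputable def gaussMap (x : ℝ) : ℝ := Int.fract x⁻¹

/-- The `k`-th partial quotient of the continued fraction of `α` (for `k ≥ 1`). -/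
noncomputable def cfA (α : ℝ) (k : ℕ) : ℕ := ⌊(gaussMap^[k-1] α)⁻¹⌋₊

/-- Denominators of the continued fraction convergents of `α`. -/
noncomputable def cfQ (α : ℝ) : ℕ → ℕ
  | 0 => 1
  | 1 => cfA α 1
  | (k+2) => cfA α (k+2) * cfQ α (k+1) + cfQ α k

/-- Numerators of the continued fraction convergents of `α`. -/
noncomputable def cfP (α : ℝ) : ℕ → ℕ
  | 0 => 0
  | 1 => 1
  | (k+2) => cfA α (k+2) * cfP α (k+1) + cfP α k

/-- `S α M = ∑_{m=1}^M 1/‖mα‖`. -/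
noncomputable def S (α : ℝ) (M : ℕ) : ℝ := ∑ m ∈ Finset.Icc 1 M, 1 / nd (m * α)

open Set

lemma volume_setOf_irrational_compl : volume {x : ℝ | Irrational x}ᶜ = 0 := by
  change volume (range ((↑) : ℚ → ℝ))ᶜᶜ = 0
  rw [compl_compl]
  exact (countable_range _).measure_zero _

lemma volume_image_inter_setOf_irrational (f : ℝ → ℝ) (s : Set ℝ) :
    volume (f '' (s ∩ {x | Irrational x})) = volume (f '' s) := by
  refine le_antisymm (measure_mono (image_mono inter_subset_left)) ?_
  have hs : s ⊆ (s ∩ {x | Irrational x}) ∪ range ((↑) : ℚ → ℝ) := fun x hx =>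
    (em (Irrational x)).imp (fun h => ⟨hx, h⟩) not_not.1
  calc volume (f '' s)
      ≤ volume (f '' (s ∩ {x | Irrational x}) ∪ f '' range ((↑) : ℚ → ℝ)) := by
        rw [← image_union]; exact measure_mono (image_mono hs)
    _ ≤ volume (f '' (s ∩ {x | Irrational x})) + volume (f '' range ((↑) : ℚ → ℝ)) :=
        measure_union_le _ _
    _ = volume (f '' (s ∩ {x | Irrational x})) := by
        rw [((countable_range _).image f).measure_zero, add_zero]

lemma measurableSet_setOf_irrational : MeasurableSet {x : ℝ | Irrational x} :=
  (countable_range ((↑) : ℚ → ℝ)).measurableSet.compl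

lemma measurable_gaussMap : Measurable gaussMap := measurable_fract.comp measurable_inv

lemma irrational_gaussMap {x : ℝ} (hx : Irrational x) : Irrational (gaussMap x) :=
  hx.inv.sub_intCast _

lemma gaussMap_mem_Ioo {x : ℝ} (hx : Irrational x) : gaussMap x ∈ Ioo 0 1 :=
  ⟨(Int.fract_nonneg _).lt_of_ne' (irrational_gaussMap hx).ne_zero, Int.fract_lt_one _⟩

lemma irrational_gaussMap_iterate {x : ℝ} (hx : Irrational x) (k : ℕ) :
    Irrational (gaussMap^[k] x) := by
  induction k with
  | zero => exact hx
  | succ k ih => rw [Function.iterate_succ_apply']; exact irrational_gaussMap ih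

lemma gaussMap_iterate_mem_Ioo {x : ℝ} (hx : Irrational x) (hx01 : x ∈ Ioo 0 1) (k : ℕ) :
    gaussMap^[k] x ∈ Ioo 0 1 := by
  cases k with
  | zero => exact hx01
  | succ k =>
    rw [Function.iterate_succ_apply']
    exact gaussMap_mem_Ioo (irrational_gaussMap_iterate hx k)

lemma cfA_succ (α : ℝ) (k : ℕ) : cfA α (k + 1) = ⌊(gaussMap^[k] α)⁻¹⌋₊ := rfl

lemma cfA_succ_succ (α : ℝ) (k : ℕ) : cfA α (k + 2) = cfA (gaussMap α) (k + 1) :=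
  congrArg (⌊·⁻¹⌋₊) (Function.iterate_succ_apply gaussMap k α)

lemma measurable_cfA (k : ℕ) : Measurable (cfA · k) :=
  Nat.measurable_floor.comp (measurable_inv.comp (measurable_gaussMap.iterate _))

lemma one_le_cfA_succ {α : ℝ} (hα : Irrational α) (hα01 : α ∈ Ioo 0 1) (k : ℕ) :
    1 ≤ cfA α (k + 1) := by
  obtain ⟨hpos, hlt⟩ := gaussMap_iterate_mem_Ioo hα hα01 k
  exact Nat.le_floor (by simpa using (one_lt_inv₀ hpos).2 hlt |>.le)

lemma lt_cfA_succ_of_gaussMap_iterate_lt {α x : ℝ} {k : ℕ} (hpos : 0 < gaussMap^[k] α)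
    (hlt : gaussMap^[k] α < 1 / (⌊x⌋₊ + 1)) : x < cfA α (k + 1) := by
  have hN : (⌊x⌋₊ : ℝ) + 1 ≤ (gaussMap^[k] α)⁻¹ := by
    rw [lt_one_div hpos (by positivity)] at hlt
    rw [one_div] at hlt
    exact hlt.le
  calc x < ⌊x⌋₊ + 1 := Nat.lt_floor_add_one x
    _ ≤ cfA α (k + 1) := by exact_mod_cast Nat.le_floor (by exact_mod_cast hN)

lemma cfA_one_add_gaussMap {α : ℝ} (hα : 0 < α) : (cfA α 1 : ℝ) + gaussMap α = α⁻¹ := by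
  rw [cfA_succ, Function.iterate_zero_apply, natCast_floor_eq_intCast_floor (by positivity)]
  exact Int.floor_add_fract _

lemma cfA_one_inv_natCast_add {m : ℕ} {β : ℝ} (hβ : β ∈ Ico 0 1) : cfA ((m + β)⁻¹) 1 = m := by
  rw [cfA_succ, Function.iterate_zero_apply, inv_inv, Nat.floor_eq_iff (by linarith [hβ.1])]
  constructor <;> linarith [hβ.1, hβ.2]

lemma gaussMap_inv_natCast_add {m : ℕ} {β : ℝ} (hβ : β ∈ Ico 0 1) : gaussMap ((m + β)⁻¹) = β := by
  rw [gaussMap, inv_inv, add_comm, Int.fract_add_natCast, Int.fract_eq_self.2 hβ]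

noncomputable def cfDigits (k : ℕ) (α : ℝ) : Fin k → ℕ := fun i => cfA α (i + 1)

lemma cfDigits_succ (k : ℕ) (α : ℝ) :
    cfDigits (k + 1) α = Fin.cons (cfA α 1) (cfDigits k (gaussMap α)) := by
  ext i
  refine Fin.cases rfl (fun j => ?_) i
  simp [cfDigits, cfA_succ_succ]

lemma measurable_cfDigits (k : ℕ) : Measurable (cfDigits k) :=
  measurable_pi_lambda _ fun _ => measurable_cfA _


lemma Real.volume_image_Ioo_of_injOn {f : ℝ → ℝ} {u v : ℝ} (huv : u ≤ v)
    (hf : ContinuousOn f (Icc u v)) (hinj : InjOn f (Icc u v)) :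
    volume (f '' Ioo u v) = ENNReal.ofReal |f v - f u| := by
  have hu : u ∈ Icc u v := left_mem_Icc.2 huv
  have hv : v ∈ Icc u v := right_mem_Icc.2 huv
  rcases hf.strictMonoOn_of_injOn_Icc' huv hinj with hmono | hanti
  · rw [hf.image_Ioo_of_strictMonoOn huv hmono, Real.volume_Ioo,
      abs_of_nonneg (sub_nonneg.2 (hmono.monotoneOn hu hv huv))]
  · rw [hf.image_Ioo_of_strictAntiOn huv hanti, Real.volume_Ioo,
      abs_of_nonpos (sub_nonpos.2 (hanti.antitoneOn hu hv huv)), neg_sub]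

structure NatMobius where
  a : ℕ
  b : ℕ
  c : ℕ
  d : ℕ

namespace NatMobius

variable (p : NatMobius)

noncomputable def apply (t : ℝ) : ℝ := (p.a + p.b * t) / (p.c + p.d * t)

def det : ℤ := p.b * p.c - p.a * p.d

variable {p}

lemma denom_pos (hc : 1 ≤ p.c) {t : ℝ} (ht : 0 ≤ t) : 0 < (p.c : ℝ) + p.d * t := by
  have : (1 : ℝ) ≤ p.c := by exact_mod_cast hc
  positivity

lemma apply_sub_apply (hc : 1 ≤ p.c) {s t : ℝ} (hs : 0 ≤ s) (ht : 0 ≤ t) :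
    p.apply t - p.apply s = p.det * (t - s) / ((p.c + p.d * s) * (p.c + p.d * t)) := by
  have := denom_pos hc hs
  have := denom_pos hc ht
  simp only [apply, det]
  field_simp
  push_cast
  ring

lemma continuousOn_apply (hc : 1 ≤ p.c) : ContinuousOn p.apply (Ici 0) :=
  ContinuousOn.div (by fun_prop) (by fun_prop) fun _ ht => (denom_pos hc ht).ne'

lemma injOn_apply (hc : 1 ≤ p.c) (hdet : p.det ≠ 0) : InjOn p.apply (Ici 0) := by
  intro s hs t ht hst
  have h := apply_sub_apply hc hs ht
  rw [hst, sub_self, eq_comm, div_eq_zero_iff] at h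
  have := denom_pos hc hs
  have := denom_pos hc ht
  rcases h with h | h
  · linarith [(mul_eq_zero.1 h).resolve_left (by exact_mod_cast hdet)]
  · exact absurd h (by positivity)

lemma volume_image_Ioo (hc : 1 ≤ p.c) (hdet : |p.det| = 1) {u v : ℝ} (hu : 0 ≤ u)
    (huv : u ≤ v) :
    volume (p.apply '' Ioo u v) =
      ENNReal.ofReal ((v - u) / ((p.c + p.d * u) * (p.c + p.d * v))) := by
  have hIcc : Icc u v ⊆ Ici 0 := fun t ht => hu.trans ht.1
  have hdet' : |(p.det : ℝ)| = 1 := by exact_mod_cast hdet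
  have := denom_pos hc hu
  have := denom_pos hc (hu.trans huv)
  have hdet0 : p.det ≠ 0 := fun h => by simp [h] at hdet
  rw [Real.volume_image_Ioo_of_injOn huv ((continuousOn_apply hc).mono hIcc)
    ((injOn_apply hc hdet0).mono hIcc), apply_sub_apply hc hu (hu.trans huv), abs_div, abs_mul,
    hdet', one_mul, abs_of_nonneg (sub_nonneg.2 huv), abs_of_pos (by positivity)]

end NatMobius

/-- `cfMobius b` is the map `t ↦ 1 / (b 0 + 1 / (b 1 + ⋯ + 1 / (b (k - 1) + t)))`. -/
def cfMobius : {k : ℕ} → (Fin k → ℕ) → NatMobius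
  | 0, _ => ⟨0, 1, 1, 0⟩
  | _ + 1, b =>
    let p := cfMobius (Fin.tail b)
    ⟨p.c, p.d, b 0 * p.c + p.a, b 0 * p.d + p.b⟩

lemma cfMobius_cons {k : ℕ} (m : ℕ) (b : Fin k → ℕ) :
    cfMobius (Fin.cons m b : Fin (k + 1) → ℕ) =
      ⟨(cfMobius b).c, (cfMobius b).d, m * (cfMobius b).c + (cfMobius b).a,
        m * (cfMobius b).d + (cfMobius b).b⟩ := by
  simp [cfMobius]

lemma one_le_cfMobius_c : ∀ {k : ℕ} {b : Fin k → ℕ}, (∀ i, 1 ≤ b i) → 1 ≤ (cfMobius b).c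
  | 0, _, _ => le_rfl
  | k + 1, b, hb => by
    rw [← Fin.cons_self_tail b, cfMobius_cons]
    have := one_le_cfMobius_c (b := Fin.tail b) fun i => hb i.succ
    have := hb 0
    nlinarith

lemma cfMobius_det : ∀ {k : ℕ} (b : Fin k → ℕ), (cfMobius b).det = (-1) ^ k
  | 0, _ => rfl
  | k + 1, b => by
    rw [← Fin.cons_self_tail b, cfMobius_cons, pow_succ, ← cfMobius_det (Fin.tail b)]
    simp only [NatMobius.det]
    push_cast
    ring

lemma cfMobius_cons_apply {k : ℕ} (m : ℕ) {b : Fin k → ℕ} (hb : 1 ≤ (cfMobius b).c) {t : ℝ}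
    (ht : 0 ≤ t) :
    (cfMobius (Fin.cons m b : Fin (k + 1) → ℕ)).apply t = (m + (cfMobius b).apply t)⁻¹ := by
  have := NatMobius.denom_pos hb ht
  rw [cfMobius_cons]
  simp only [NatMobius.apply]
  field_simp
  push_cast
  ring

def cfCylinder {k : ℕ} (b : Fin k → ℕ) (c : ℝ) : Set ℝ :=
  {α | Irrational α ∧ α ∈ Ioo 0 1 ∧ cfDigits k α = b ∧ gaussMap^[k] α < c}

lemma measurableSet_cfCylinder {k : ℕ} (b : Fin k → ℕ) (c : ℝ) :
    MeasurableSet (cfCylinder b c) :=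
  measurableSet_setOf_irrational.inter <| measurableSet_Ioo.inter <|
    ((measurable_cfDigits k) (measurableSet_singleton b)).inter <|
      measurableSet_lt (measurable_gaussMap.iterate k) measurable_const

lemma one_le_of_mem_cfCylinder {k : ℕ} {b : Fin k → ℕ} {c α : ℝ} (h : α ∈ cfCylinder b c)
    (i : Fin k) : 1 ≤ b i := by
  obtain ⟨hirr, h01, rfl, -⟩ := h
  exact one_le_cfA_succ hirr h01 i

lemma cfCylinder_cons {k : ℕ} {m : ℕ} (hm : 1 ≤ m) (b : Fin k → ℕ) (c : ℝ) :
    cfCylinder (Fin.cons m b : Fin (k + 1) → ℕ) c =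
      (fun β : ℝ => ((m : ℝ) + β)⁻¹) '' cfCylinder b c := by
  ext α
  constructor
  · rintro ⟨hirr, h01, hdig, htail⟩
    rw [cfDigits_succ, Fin.cons_inj] at hdig
    refine ⟨gaussMap α, ⟨irrational_gaussMap hirr, gaussMap_mem_Ioo hirr, hdig.2, htail⟩, ?_⟩
    change ((m : ℝ) + gaussMap α)⁻¹ = α
    rw [← hdig.1, cfA_one_add_gaussMap h01.1, inv_inv]
  · rintro ⟨β, ⟨hirr, h01, hdig, htail⟩, rfl⟩
    have hβ : β ∈ Ico 0 1 := Ioo_subset_Ico_self h01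
    have hm' : (1 : ℝ) ≤ m := by exact_mod_cast hm
    have hmβ : 1 < (m : ℝ) + β := by linarith [h01.1]
    refine ⟨(hirr.natCast_add m).inv, ⟨inv_pos.2 (by linarith), inv_lt_one_of_one_lt₀ hmβ⟩, ?_, ?_⟩
    · rw [cfDigits_succ, cfA_one_inv_natCast_add hβ, gaussMap_inv_natCast_add hβ, hdig]
    · rwa [Function.iterate_succ_apply, gaussMap_inv_natCast_add hβ]

lemma cfCylinder_eq_image : ∀ {k : ℕ} {b : Fin k → ℕ}, (∀ i, 1 ≤ b i) → ∀ {c : ℝ}, c ≤ 1 →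
    cfCylinder b c = (cfMobius b).apply '' (Ioo 0 c ∩ {x | Irrational x})
  | 0, b, _, c, hc => by
    have hid : (cfMobius b).apply = id := funext fun t => by simp [cfMobius, NatMobius.apply]
    ext α
    simp only [cfCylinder, hid, image_id, mem_inter_iff, mem_Ioo,
      Function.iterate_zero_apply]
    constructor
    · rintro ⟨hirr, ⟨h0, -⟩, -, hαc⟩
      exact ⟨⟨h0, hαc⟩, hirr⟩
    · rintro ⟨⟨h0, hαc⟩, hirr⟩
      exact ⟨hirr, ⟨h0, hαc.trans_le hc⟩, Subsingleton.elim _ _, hαc⟩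
  | k + 1, b, hb, c, hc => by
    have htail : ∀ i, 1 ≤ Fin.tail b i := fun i => hb i.succ
    rw [← Fin.cons_self_tail b, cfCylinder_cons (hb 0), cfCylinder_eq_image htail hc,
      ← image_comp]
    exact image_congr fun t ht => (cfMobius_cons_apply _ (one_le_cfMobius_c htail) ht.1.1.le).symm

lemma volume_cfCylinder {k : ℕ} {b : Fin k → ℕ} (hb : ∀ i, 1 ≤ b i) {c : ℝ} (hc0 : 0 ≤ c)
    (hc1 : c ≤ 1) :
    volume (cfCylinder b c) = ENNReal.ofReal
      (c / ((cfMobius b).c * ((cfMobius b).c + (cfMobius b).d * c))) := by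
  rw [cfCylinder_eq_image hb hc1, volume_image_inter_setOf_irrational,
    NatMobius.volume_image_Ioo (one_le_cfMobius_c hb) (by simp [cfMobius_det]) le_rfl hc0]
  simp

lemma ofReal_mul_volume_cfCylinder_le {k : ℕ} (b : Fin k → ℕ) {c : ℝ} (hc0 : 0 ≤ c)
    (hc1 : c ≤ 1) :
    ENNReal.ofReal c * volume (cfCylinder b 1) ≤ volume (cfCylinder b c) := by
  by_cases hb : ∀ i, 1 ≤ b i
  · rw [volume_cfCylinder hb hc0 hc1, volume_cfCylinder hb zero_le_one le_rfl,
      ← ENNReal.ofReal_mul hc0]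
    refine ENNReal.ofReal_le_ofReal ?_
    have hq : (1 : ℝ) ≤ (cfMobius b).c := by exact_mod_cast one_le_cfMobius_c hb
    have hq' : (0 : ℝ) ≤ (cfMobius b).d := Nat.cast_nonneg _
    rw [mul_one, mul_one_div]
    gcongr
    exact mul_le_of_le_one_right hq' hc1
  · have hempty (c' : ℝ) : cfCylinder b c' = ∅ :=
      eq_empty_of_forall_notMem fun _ hα => hb (one_le_of_mem_cfCylinder hα)
    simp [hempty]

lemma pairwiseDisjoint_cfCylinder {k : ℕ} (B : Set (Fin k → ℕ)) (c : ℝ) :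
    B.PairwiseDisjoint (cfCylinder · c) := fun _ _ _ _ hbb' =>
  disjoint_left.2 fun _ hα hα' => hbb' (hα.2.2.1.symm.trans hα'.2.2.1)

lemma biUnion_cfCylinder_one {k : ℕ} (B : Set (Fin k → ℕ)) :
    ⋃ b ∈ B, cfCylinder b 1 = cfDigits k ⁻¹' B ∩ Ioo 0 1 ∩ {x | Irrational x} := by
  ext α
  simp only [mem_iUnion, cfCylinder, mem_inter_iff, mem_preimage, exists_prop]
  constructor
  · rintro ⟨b, hb, hirr, h01, rfl, -⟩
    exact ⟨⟨hb, h01⟩, hirr⟩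
  · rintro ⟨⟨hB, h01⟩, hirr⟩
    exact ⟨_, hB, hirr, h01, rfl, (gaussMap_iterate_mem_Ioo hirr h01 k).2⟩

lemma biUnion_cfCylinder_subset {k : ℕ} (B : Set (Fin k → ℕ)) (x : ℝ) :
    ⋃ b ∈ B, cfCylinder b (1 / (⌊x⌋₊ + 1)) ⊆
      {α | x < cfA α (k + 1)} ∩ (cfDigits k ⁻¹' B ∩ Ioo 0 1) := by
  simp only [iUnion_subset_iff]
  rintro b hb α ⟨hirr, h01, rfl, htail⟩
  exact ⟨lt_cfA_succ_of_gaussMap_iterate_lt (gaussMap_iterate_mem_Ioo hirr h01 k).1 htail, hb, h01⟩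

noncomputable def cfFiltration : Filtration ℕ (inferInstance : MeasurableSpace ℝ) where
  seq k := MeasurableSpace.comap (cfDigits k) inferInstance
  mono' k n hkn := by
    change MeasurableSpace.comap (cfDigits k) _ ≤ MeasurableSpace.comap (cfDigits n) _
    have : cfDigits k = (fun v i => v (Fin.castLE hkn i)) ∘ cfDigits n := rfl
    rw [this, ← MeasurableSpace.comap_comp]
    exact MeasurableSpace.comap_mono
      (measurable_pi_lambda _ fun _ => measurable_pi_apply _).comap_le
  le' k := (measurable_cfDigits k).comap_le

/-- `cfA α 0` is not determined by `cfFiltration 0`, hence the guard `n ≠ 0`. -/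
lemma measurableSet_cfFiltration_setOf_cfA (n : ℕ) (P : ℕ → Prop) :
    MeasurableSet[cfFiltration n] {α | n ≠ 0 ∧ P (cfA α n)} := by
  cases n with
  | zero => simp
  | succ k =>
    exact ⟨{b | P (b (Fin.last k))}, (to_countable _).measurableSet, by ext; simp [cfDigits]⟩

lemma ofReal_mul_le_volume_lt_cfA_inter {k : ℕ} (x : ℝ) {A : Set ℝ}
    (hA : MeasurableSet[cfFiltration k] A) :
    ENNReal.ofReal (1 / (⌊x⌋₊ + 1)) * volume.restrict (Ioo 0 1) A ≤
      volume.restrict (Ioo 0 1) ({α | x < cfA α (k + 1)} ∩ A) := by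
  obtain ⟨B, -, rfl⟩ := hA
  set c : ℝ := 1 / (⌊x⌋₊ + 1)
  have hc0 : 0 ≤ c := by positivity
  have hc1 : c ≤ 1 := div_le_one_of_le₀ (by simp) (by positivity)
  have hB : MeasurableSet (cfDigits k ⁻¹' B) :=
    measurable_cfDigits k B.to_countable.measurableSet
  have hlt : MeasurableSet {α | x < cfA α (k + 1)} :=
    measurableSet_lt measurable_const (measurable_from_nat.comp (measurable_cfA _))
  rw [Measure.restrict_apply hB, Measure.restrict_apply (hlt.inter hB),
    ← measure_inter_conull volume_setOf_irrational_compl, ← biUnion_cfCylinder_one,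
    measure_biUnion B.to_countable (pairwiseDisjoint_cfCylinder B 1)
      fun b _ => measurableSet_cfCylinder b 1, ← ENNReal.tsum_mul_left]
  calc ∑' b : B, ENNReal.ofReal c * volume (cfCylinder (b : Fin k → ℕ) 1)
      ≤ ∑' b : B, volume (cfCylinder (b : Fin k → ℕ) c) :=
        ENNReal.tsum_le_tsum fun b => ofReal_mul_volume_cfCylinder_le b.1 hc0 hc1
    _ = volume (⋃ b ∈ B, cfCylinder b c) := (measure_biUnion B.to_countable
        (pairwiseDisjoint_cfCylinder B c) fun b _ => measurableSet_cfCylinder b c).symm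
    _ ≤ volume ({α | x < cfA α (k + 1)} ∩ cfDigits k ⁻¹' B ∩ Ioo 0 1) := by
        rw [inter_assoc]
        exact measure_mono (biUnion_cfCylinder_subset B x)

lemma ae_le_condExp_indicator_of_forall_le_measure_inter {Ω : Type*} {m m0 : MeasurableSpace Ω}
    (hm : m ≤ m0) {μ : Measure Ω} [IsFiniteMeasure μ] {E : Set Ω} (hE : MeasurableSet E)
    {ε : ℝ} (hε : 0 ≤ ε) (h : ∀ A, MeasurableSet[m] A → ENNReal.ofReal ε * μ A ≤ μ (E ∩ A)) :
    ∀ᵐ ω ∂μ, ε ≤ μ[E.indicator 1 | m] ω := by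
  have hint : Integrable (E.indicator (1 : Ω → ℝ)) μ := (integrable_const 1).indicator hE
  have : IsFiniteMeasure (μ.trim hm) := isFiniteMeasure_trim hm
  refine ae_of_ae_trim hm (ae_le_of_forall_setIntegral_le (integrable_const ε)
    (integrable_condExp.trim hm stronglyMeasurable_condExp) fun A hA _ => ?_)
  rw [← setIntegral_trim hm stronglyMeasurable_condExp hA, setIntegral_condExp hm hint hA,
    integral_indicator_one hE, setIntegral_const, smul_eq_mul, Measure.real, Measure.real,
    trim_measurableSet_eq hm hA, Measure.restrict_apply hE, mul_comm]
  have := ENNReal.toReal_mono (measure_ne_top μ _) (h A hA)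
  rwa [ENNReal.toReal_mul, ENNReal.toReal_ofReal hε] at this

lemma not_summable_one_div_floor_add_one {f : ℕ → ℝ} (hf : ¬ Summable fun k => 1 / f k) :
    ¬ Summable fun k => 1 / ((⌊f k⌋₊ : ℝ) + 1) := by
  intro hs
  refine hf (Summable.of_norm_bounded_eventually_nat (hs.mul_left 2) ?_)
  filter_upwards [hs.tendsto_atTop_zero.eventually (gt_mem_nhds (by norm_num : (0 : ℝ) < 1 / 2))]
    with k hk
  have hf1 : (1 : ℝ) < ⌊f k⌋₊ := by
    rw [div_lt_div_iff₀ (by positivity) two_pos] at hk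
    linarith
  have hfloor : 0 < ⌊f k⌋₊ := by exact_mod_cast zero_lt_one.trans hf1
  have hfk : (⌊f k⌋₊ : ℝ) ≤ f k := Nat.floor_le (zero_le_one.trans (Nat.floor_pos.1 hfloor))
  rw [Real.norm_eq_abs, abs_of_pos (one_div_pos.2 (by linarith)), mul_one_div,
    div_le_div_iff₀ (by linarith) (by linarith)]
  linarith

theorem khinchin_divergent_general (φ : ℕ → ℝ)
    (hsum : ¬ Summable (fun k : ℕ => 1 / φ k)) :
    ∀ᵐ α ∂(MeasureTheory.volume.restrict (Set.Ioo (0:ℝ) 1)),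
      ∃ᶠ k : ℕ in Filter.atTop, φ k < (cfA α k : ℝ) := by
  set μ := volume.restrict (Ioo (0 : ℝ) 1)
  set E : ℕ → Set ℝ := fun n => {α | n ≠ 0 ∧ φ n < cfA α n}
  have hE : ∀ n, MeasurableSet[cfFiltration n] (E n) := fun n =>
    measurableSet_cfFiltration_setOf_cfA n (φ n < ·)
  have hcond : ∀ k, ∀ᵐ α ∂μ,
      1 / (⌊φ (k + 1)⌋₊ + 1 : ℝ) ≤ μ[(E (k + 1)).indicator 1 | cfFiltration k] α := fun k =>
    ae_le_condExp_indicator_of_forall_le_measure_inter (cfFiltration.le k)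
      (cfFiltration.le _ _ (hE (k + 1))) (by positivity) fun A hA => by
        have hEk : E (k + 1) = {α | φ (k + 1) < cfA α (k + 1)} := by simp [E]
        exact hEk ▸ ofReal_mul_le_volume_lt_cfA_inter (φ (k + 1)) hA
  have hdiv : Tendsto (fun n => ∑ k ∈ Finset.range n, 1 / (⌊φ (k + 1)⌋₊ + 1 : ℝ)) atTop atTop :=
    (not_summable_iff_tendsto_nat_atTop_of_nonneg fun k => by positivity).1
      ((summable_nat_add_iff 1).not.2 (not_summable_one_div_floor_add_one hsum))
  filter_upwards [ae_mem_limsup_atTop_iff μ hE, ae_all_iff.2 hcond] with α hlimsup hα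
  have hfreq := mem_limsup_iff_frequently_mem.1 <| hlimsup.2 <|
    tendsto_atTop_mono (fun n => Finset.sum_le_sum fun k _ => hα k) hdiv
  exact hfreq.mono fun _ hn => hn.2

theorem khinchin_divergent (φ : ℕ → ℝ) (hφ : ∀ k, 0 < φ k)
    (hsum : ¬ Summable (fun k : ℕ => 1 / φ k)) :
    ∀ᵐ α ∂(MeasureTheory.volume.restrict (Set.Ioo (0:ℝ) 1)),
      ∃ᶠ k : ℕ in Filter.atTop, φ k < (cfA α k : ℝ) :=
  khinchin_divergent_general φ hsum
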